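/- Let N ≥ 2 be an even integer and c = (c₁,c₂,c₃) ∈ ℝ³. The matrix ϖ(c) is positive semidefinite if and only if (c₁,c₂,c₃) lies in the tetrahedron T_{(−1)^{N/2}}, i.e. the convex hull in ℝ³ of the four points (1,(−1)^{N/2},1), (−1,−(−1)^{N/2},1), (1,−(−1)^{N/2},−1), (−1,(−1)^{N/2},−1). -/

import Mathlib

/-!
Write `X, Y, Z` for the Kronecker powers `σᵢ^{⊗N}`. They are commuting Hermitian involutions,
and for even `N` one has `XZ = ZX = s Y` with `s = (-1)^{N/2}`. Hence for signs `a, b` the state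
at the vertex `(a, s a b, b)` of `T_s` is `2^{-N} (1 + aX)(1 + bZ)`, a product of commuting
positive semidefinite matrices, and convexity of `c ↦ ϖ(c)` gives positivity on all of `T_s`.
Conversely, `tr(ϖ(c) ϖ(d)) = 2^{-N} (1 + c ⬝ d)`, so positivity of `ϖ(c)` against the four
vertex states gives `1 + c ⬝ vᵢ ≥ 0` at each vertex `vᵢ`, and these four numbers divided by `4`
are the barycentric coordinates of `c` in `T_s`.
-/

open Matrix BigOperators Polynomial
open scoped ComplexOrder

/-- The three Pauli matrices. -/
noncomputable def pauli : Fin 3 → Matrix (Fin 2) (Fin 2) ℂ :=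
  ![!![0, 1; 1, 0], !![0, -Complex.I; Complex.I, 0], !![1, 0; 0, -1]]

/-- The `N`-fold Kronecker power of a 2×2 matrix, with rows and columns indexed by
`Fin N → Fin 2` (the `N`-qubit computational basis). -/
noncomputable def kronPow (A : Matrix (Fin 2) (Fin 2) ℂ) (N : ℕ) :
    Matrix (Fin N → Fin 2) (Fin N → Fin 2) ℂ :=
  Matrix.of fun i j => ∏ k, A (i k) (j k)

/-- The `M³_N` state `ϖ(c) = 2^{-N} (I + c₁ σ₁^{⊗N} + c₂ σ₂^{⊗N} + c₃ σ₃^{⊗N})`. -/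
noncomputable def Mstate (N : ℕ) (c : Fin 3 → ℝ) :
    Matrix (Fin N → Fin 2) (Fin N → Fin 2) ℂ :=
  ((2 : ℂ) ^ N)⁻¹ • (1 + ∑ j : Fin 3, (c j : ℂ) • kronPow (pauli j) N)


/-- The tetrahedron `T_s`: convex hull of `(1,s,1), (−1,−s,1), (1,−s,−1), (−1,s,−1)`. -/
noncomputable def tet (s : ℝ) : Set (Fin 3 → ℝ) :=
  convexHull ℝ {![1, s, 1], ![-1, -s, 1], ![1, -s, -1], ![-1, s, -1]}

section PosSemidef

variable {n : Type*} [Fintype n] [DecidableEq n]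

lemma Matrix.IsHermitian.posSemidef_one_add {𝕜 : Type*} [RCLike 𝕜] {A : Matrix n n 𝕜}
    (hA : A.IsHermitian) (hA2 : A * A = 1) : (1 + A).PosSemidef := by
  have h : (1 + A)ᴴ * (1 + A) = (2 : ℝ) • (1 + A) := by
    rw [conjTranspose_add, conjTranspose_one, hA.eq, add_mul, one_mul, mul_add, mul_one, hA2]
    module
  have := (posSemidef_conjTranspose_mul_self (1 + A)).smul (a := (2⁻¹ : ℝ)) (by norm_num)
  rwa [h, smul_smul, inv_mul_cancel₀ two_ne_zero, one_smul] at this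

variable {A B : Matrix n n ℂ}

open scoped MatrixOrder Matrix.Norms.L2Operator in
lemma Matrix.PosSemidef.mul_of_commute (hA : A.PosSemidef) (hB : B.PosSemidef)
    (hAB : Commute A B) : (A * B).PosSemidef := by
  rw [← Matrix.nonneg_iff_posSemidef] at *
  exact hAB.mul_nonneg hA hB

open scoped MatrixOrder Matrix.Norms.L2Operator in
lemma Matrix.PosSemidef.trace_mul_nonneg (hA : A.PosSemidef) (hB : B.PosSemidef) :
    0 ≤ (A * B).trace := by
  obtain ⟨C, rfl⟩ := CStarAlgebra.nonneg_iff_eq_star_mul_self.mp hB.nonneg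
  rw [← Matrix.mul_assoc, Matrix.trace_mul_cycle]
  exact (hA.mul_mul_conjTranspose_same C).trace_nonneg

end PosSemidef

lemma Complex.I_pow_of_even {N : ℕ} (hN : Even N) : Complex.I ^ N = (-1) ^ (N / 2) := by
  obtain ⟨m, rfl⟩ := hN
  rw [← two_mul, pow_mul, Complex.I_sq, Nat.mul_div_cancel_left m two_pos]

section KronPow

variable (A B : Matrix (Fin 2) (Fin 2) ℂ) (N : ℕ)

lemma kronPow_mul : kronPow A N * kronPow B N = kronPow (A * B) N := by
  ext i j
  simp only [kronPow, mul_apply, of_apply]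
  rw [Fintype.prod_sum fun k t => A (i k) t * B t (j k)]
  exact Finset.sum_congr rfl fun x _ => Finset.prod_mul_distrib.symm

lemma kronPow_one : kronPow 1 N = 1 := by
  ext i j
  simp [kronPow, one_apply, Fintype.prod_boole, funext_iff]

lemma kronPow_smul (z : ℂ) : kronPow (z • A) N = z ^ N • kronPow A N := by
  ext i j
  simp [kronPow, Finset.prod_mul_distrib]

lemma conjTranspose_kronPow : (kronPow A N)ᴴ = kronPow Aᴴ N := by
  ext i j
  simp [kronPow, conjTranspose_apply]

lemma trace_kronPow : (kronPow A N).trace = A.trace ^ N := by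
  simp only [trace, diag, kronPow, of_apply]
  exact (Fintype.sum_pow (fun t => A t t) N).symm

end KronPow

lemma pauli_mul_self (j : Fin 3) : pauli j * pauli j = 1 := by
  fin_cases j <;> simp [pauli, one_fin_two]

lemma pauli_isHermitian (j : Fin 3) : (pauli j).IsHermitian := by
  fin_cases j <;> ext i k <;> fin_cases i <;> fin_cases k <;> simp [pauli]

lemma pauli_zero_mul_pauli_two : pauli 0 * pauli 2 = -Complex.I • pauli 1 := by
  simp [pauli, smul_of]

lemma pauli_two_mul_pauli_zero : pauli 2 * pauli 0 = Complex.I • pauli 1 := by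
  simp [pauli]

lemma trace_pauli (j : Fin 3) : (pauli j).trace = 0 := by
  fin_cases j <;> simp [pauli, trace_fin_two]

lemma trace_pauli_mul (i j : Fin 3) :
    (pauli i * pauli j).trace = if i = j then 2 else 0 := by
  fin_cases i <;> fin_cases j <;> simp [pauli, trace_fin_two] <;> norm_num

section PauliString

variable (N : ℕ)

lemma kronPow_pauli_mul_self (j : Fin 3) : kronPow (pauli j) N * kronPow (pauli j) N = 1 := by
  rw [kronPow_mul, pauli_mul_self, kronPow_one]

lemma isHermitian_kronPow_pauli (j : Fin 3) : (kronPow (pauli j) N).IsHermitian := by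
  rw [IsHermitian, conjTranspose_kronPow, (pauli_isHermitian j).eq]

variable {N}

lemma kronPow_pauli_zero_mul_two (hN : Even N) :
    kronPow (pauli 0) N * kronPow (pauli 2) N = (-1 : ℂ) ^ (N / 2) • kronPow (pauli 1) N := by
  rw [kronPow_mul, pauli_zero_mul_pauli_two, kronPow_smul, hN.neg_pow, Complex.I_pow_of_even hN]

lemma kronPow_pauli_two_mul_zero (hN : Even N) :
    kronPow (pauli 2) N * kronPow (pauli 0) N = (-1 : ℂ) ^ (N / 2) • kronPow (pauli 1) N := by
  rw [kronPow_mul, pauli_two_mul_pauli_zero, kronPow_smul, Complex.I_pow_of_even hN]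

lemma trace_kronPow_pauli (hN : N ≠ 0) (j : Fin 3) : (kronPow (pauli j) N).trace = 0 := by
  rw [trace_kronPow, trace_pauli, zero_pow hN]

lemma trace_kronPow_pauli_mul (hN : N ≠ 0) (i j : Fin 3) :
    (kronPow (pauli i) N * kronPow (pauli j) N).trace = if i = j then 2 ^ N else 0 := by
  rw [kronPow_mul, trace_kronPow, trace_pauli_mul]
  split_ifs <;> simp [hN]

end PauliString

lemma Mstate_smul_add_smul (N : ℕ) (c d : Fin 3 → ℝ) {a b : ℝ} (hab : a + b = 1) :
    Mstate N (a • c + b • d) = a • Mstate N c + b • Mstate N d := by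
  obtain rfl : b = 1 - a := by linarith
  simp only [Mstate, Fin.sum_univ_three, Pi.add_apply, Pi.smul_apply, smul_eq_mul,
    ← Complex.coe_smul]
  push_cast
  module

lemma convex_setOf_posSemidef_Mstate (N : ℕ) : Convex ℝ {c | (Mstate N c).PosSemidef} := by
  intro c hc d hd a b ha hb hab
  rw [Set.mem_ofPred_eq, Mstate_smul_add_smul N c d hab]
  exact (hc.smul ha).add (hd.smul hb)

lemma trace_Mstate_mul {N : ℕ} (hN : N ≠ 0) (c d : Fin 3 → ℝ) :
    (Mstate N c * Mstate N d).trace = (((2 ^ N)⁻¹ * (1 + c ⬝ᵥ d) : ℝ) : ℂ) := by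
  simp only [Mstate, smul_mul_smul, add_mul, mul_add, Finset.sum_mul, Finset.mul_sum, one_mul,
    mul_one, trace_smul, trace_add, trace_sum, trace_one, trace_kronPow_pauli hN,
    trace_kronPow_pauli_mul hN]
  simp only [smul_zero, Finset.sum_const_zero, zero_add, smul_ite, Finset.sum_ite_eq',
    Finset.mem_univ, if_true, Fintype.card_fun, Fintype.card_fin, dotProduct]
  push_cast
  rw [← Finset.sum_smul, smul_eq_mul, smul_eq_mul, add_zero]
  field_simp

lemma Mstate_eq_smul_mul {N : ℕ} (hN : Even N) (a b : ℝ) :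
    Mstate N ![a, (-1) ^ (N / 2) * a * b, b] = ((2 : ℝ) ^ N)⁻¹ •
      ((1 + (a : ℂ) • kronPow (pauli 0) N) * (1 + (b : ℂ) • kronPow (pauli 2) N)) := by
  simp only [Mstate, Fin.sum_univ_three, add_mul, mul_add, one_mul, mul_one, smul_mul_smul,
    kronPow_pauli_zero_mul_two hN, smul_smul]
  push_cast
  module

lemma posSemidef_Mstate_of_mul_self_eq_one {N : ℕ} (hN : Even N) {a b : ℝ} (ha : a * a = 1)
    (hb : b * b = 1) :
    (Mstate N ![a, (-1) ^ (N / 2) * a * b, b]).PosSemidef := by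
  have hsign {x : ℝ} (hx : x * x = 1) (j : Fin 3) :
      (1 + (x : ℂ) • kronPow (pauli j) N).PosSemidef := by
    refine ((isHermitian_kronPow_pauli N j).smul (Complex.conj_ofReal x)).posSemidef_one_add ?_
    rw [smul_mul_smul, ← Complex.ofReal_mul, hx, Complex.ofReal_one, one_smul,
      kronPow_pauli_mul_self]
  have hXZ : Commute (kronPow (pauli 0) N) (kronPow (pauli 2) N) :=
    (kronPow_pauli_zero_mul_two hN).trans (kronPow_pauli_two_mul_zero hN).symm
  rw [Mstate_eq_smul_mul hN]
  refine ((hsign ha 0).mul_of_commute (hsign hb 2) ?_).smul (by positivity)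
  exact (Commute.one_left _).add_left
    ((Commute.one_right _).add_right ((hXZ.smul_left _).smul_right _))

def tetVertex (s : ℝ) : Fin 4 → Fin 3 → ℝ :=
  ![![1, s, 1], ![-1, -s, 1], ![1, -s, -1], ![-1, s, -1]]

lemma tet_eq_convexHull_range (s : ℝ) : tet s = convexHull ℝ (Set.range (tetVertex s)) := by
  simp only [tet, tetVertex, Matrix.range_cons, Matrix.range_empty, Set.union_empty,
    Set.singleton_union]

lemma mem_tet_of_forall_one_add_dotProduct_nonneg {s : ℝ} (hs : s * s = 1) {c : Fin 3 → ℝ}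
    (hc : ∀ i, 0 ≤ 1 + c ⬝ᵥ tetVertex s i) : c ∈ tet s := by
  have hsum : ∑ i, (1 + c ⬝ᵥ tetVertex s i) / 4 = 1 := by
    simp [Fin.sum_univ_four, tetVertex, dotProduct, Fin.sum_univ_three]
    ring
  have hcomb : ∑ i, ((1 + c ⬝ᵥ tetVertex s i) / 4) • tetVertex s i = c := by
    ext j
    fin_cases j <;> simp [Fin.sum_univ_four, tetVertex, dotProduct, Fin.sum_univ_three]
    · ring
    · linear_combination c 1 * hs
    · ring
  rw [tet_eq_convexHull_range, ← hcomb]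
  exact (convex_convexHull ℝ _).sum_mem (fun i _ => by linarith [hc i]) hsum
    fun i _ => subset_convexHull ℝ _ (Set.mem_range_self i)

lemma posSemidef_Mstate_tetVertex {N : ℕ} (hN : Even N) (i : Fin 4) :
    (Mstate N (tetVertex ((-1) ^ (N / 2)) i)).PosSemidef := by
  have h1 : (1 : ℝ) * 1 = 1 := by norm_num
  have h2 : (-1 : ℝ) * -1 = 1 := by norm_num
  fin_cases i
  · simpa [tetVertex] using posSemidef_Mstate_of_mul_self_eq_one hN h1 h1
  · simpa [tetVertex] using posSemidef_Mstate_of_mul_self_eq_one hN h2 h1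
  · simpa [tetVertex] using posSemidef_Mstate_of_mul_self_eq_one hN h1 h2
  · simpa [tetVertex] using posSemidef_Mstate_of_mul_self_eq_one hN h2 h2

theorem stmt2 (N : ℕ) (hN : Even N) (hN2 : 2 ≤ N) (c : Fin 3 → ℝ) :
    (Mstate N c).PosSemidef ↔ c ∈ tet ((-1 : ℝ)^(N/2)) := by
  constructor
  · intro hc
    refine mem_tet_of_forall_one_add_dotProduct_nonneg (by rw [← mul_pow]; norm_num) fun i => ?_
    have htrace := hc.trace_mul_nonneg (posSemidef_Mstate_tetVertex hN i)
    rw [trace_Mstate_mul (by omega), Complex.zero_le_real] at htrace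
    exact (mul_nonneg_iff_of_pos_left (by positivity)).1 htrace
  · intro hc
    rw [tet_eq_convexHull_range] at hc
    exact convexHull_min (Set.range_subset_iff.2 (posSemidef_Mstate_tetVertex hN))
      (convex_setOf_posSemidef_Mstate N) hc
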